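/- For every integer m ≥ 5 and every k with ⌊m/4⌋ ≤ k ≤ 3⌊m/4⌋, there exist polygonal curves σ and τ of complexity m in ℝ such that the k-DTW distance d_kDTW(σ,τ) is strictly smaller than the sum of the k largest distances contributing to any traversal realizing the DTW distance d_DTW(σ,τ). -/

import Mathlib

open List

/-- A (monotone) traversal of two curves with `m'` and `m''` vertices:
a sequence of (0-based) index pairs starting at `(0,0)`, ending at `(m'-1, m''-1)`,
where each pair is followed by one that increments at least one index by one. -/
def IsTraversal (m' m'' : ℕ) (T : List (ℕ × ℕ)) : Prop :=
  T ≠ [] ∧ T.head? = some (0, 0) ∧ T.getLast? = some (m' - 1, m'' - 1) ∧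
  (∀ p ∈ T, p.1 < m' ∧ p.2 < m'') ∧
  T.Chain' (fun a b => b = (a.1 + 1, a.2) ∨ b = (a.1, a.2 + 1) ∨ b = (a.1 + 1, a.2 + 1))

/-- Sum of the `k` largest entries of a list of reals (zero-padded if the list is shorter). -/
noncomputable def topkSum (k : ℕ) (l : List ℝ) : ℝ :=
  ((l.insertionSort (· ≥ ·)).take k).sum

/-- The list of matched distances of a traversal. -/
def matchedDists {E : Type*} [PseudoMetricSpace E] (σ τ : ℕ → E) (T : List (ℕ × ℕ)) :
    List ℝ :=
  T.map fun p => dist (σ p.1) (τ p.2)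

/-- The `k`-DTW distance of curves `σ` (complexity `m'`) and `τ` (complexity `m''`). -/
noncomputable def kDTW {E : Type*} [PseudoMetricSpace E] (k : ℕ) (σ τ : ℕ → E)
    (m' m'' : ℕ) : ℝ :=
  sInf {x | ∃ T, IsTraversal m' m'' T ∧ x = topkSum k (matchedDists σ τ T)}

/-- The DTW distance. -/
noncomputable def DTW {E : Type*} [PseudoMetricSpace E] (σ τ : ℕ → E) (m' m'' : ℕ) : ℝ :=
  sInf {x | ∃ T, IsTraversal m' m'' T ∧ x = (matchedDists σ τ T).sum}

/-- The discrete Fréchet distance. -/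
noncomputable def discreteFrechet {E : Type*} [PseudoMetricSpace E] (σ τ : ℕ → E)
    (m' m'' : ℕ) : ℝ :=
  sInf {x | ∃ T, IsTraversal m' m'' T ∧ x = (matchedDists σ τ T).foldr max 0}

/-!
Write `m = n + 5` and take `σ = (0, …, 0, 1)` and `τ = (1, …, 1, 2, 0, 0, 0)` with `n + 1` ones.
Going down the first column and then along the last row only matches points at distance at most
`1`, so `kDTW k σ τ ≤ k`. The diagonal costs `n + 4`, whereas a traversal that reaches the last
point of `σ` before passing the `2` of `τ` matches every point of `σ` at distance at least `1`
and costs at least `n + 5`. So a DTW-optimal traversal matches the first `n + 2` points of `τ`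
with zeros of `σ`; together with the final pair this gives `n + 3 ≥ k` distances at least `1`,
one of them equal to `2`, and its top-`k` sum is at least `k + 1`.
-/

theorem List.mem_of_isChain_le_add_one {l : List ℕ} (hl : l.IsChain (fun x y => y ≤ x + 1))
    {a b i : ℕ} (ha : l.head? = some a) (hb : l.getLast? = some b) (hai : a ≤ i) (hib : i ≤ b) :
    i ∈ l := by
  induction l generalizing a with
  | nil => simp at ha
  | cons x t ih =>
    obtain rfl : x = a := by simpa using ha
    rcases hai.eq_or_lt with rfl | hlt
    · exact mem_cons_self
    cases t with
    | nil => simp only [getLast?_singleton, Option.some.injEq] at hb; omega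
    | cons y t =>
      rw [isChain_cons_cons] at hl
      rw [getLast?_cons_cons] at hb
      exact mem_cons_of_mem _ (ih hl.2 rfl hb (by omega))

namespace IsTraversal

variable {m' m'' : ℕ} {T : List (ℕ × ℕ)}

theorem lt_of_mem (hT : IsTraversal m' m'' T) {p : ℕ × ℕ} (hp : p ∈ T) : p.1 < m' ∧ p.2 < m'' :=
  hT.2.2.2.1 p hp

theorem pairwise_le (hT : IsTraversal m' m'' T) : T.Pairwise (· ≤ ·) := by
  obtain ⟨-, -, -, -, hchain⟩ := hT
  refine isChain_iff_pairwise.mp (hchain.imp ?_)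
  rintro a b (rfl | rfl | rfl) <;> simp [Prod.le_def]

theorem le_total_of_mem (hT : IsTraversal m' m'' T) {p q : ℕ × ℕ} (hp : p ∈ T) (hq : q ∈ T) :
    p ≤ q ∨ q ≤ p := by
  have : Std.Symm fun p q : ℕ × ℕ => p ≤ q ∨ q ≤ p := ⟨fun _ _ => Or.symm⟩
  have hR : T.Pairwise fun p q => p ≤ q ∨ q ≤ p := hT.pairwise_le.imp Or.inl
  exact hR.forall_of_forall (fun _ _ => .inl le_rfl) hp hq

theorem last_mem (hT : IsTraversal m' m'' T) : (m' - 1, m'' - 1) ∈ T :=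
  mem_of_mem_getLast? hT.2.2.1

theorem exists_mem_fst (hT : IsTraversal m' m'' T) {i : ℕ} (hi : i < m') : ∃ j, (i, j) ∈ T := by
  obtain ⟨-, hhead, hlast, -, hchain⟩ := hT
  have hchain' : (T.map Prod.fst).IsChain (fun x y => y ≤ x + 1) :=
    isChain_map _ |>.mpr <| hchain.imp <| by rintro a b (rfl | rfl | rfl) <;> simp
  have := mem_of_isChain_le_add_one hchain' (by simp [hhead]) (by simp [hlast]) (Nat.zero_le i)
    (Nat.le_sub_one_of_lt hi)
  simpa using this

theorem exists_mem_snd (hT : IsTraversal m' m'' T) {j : ℕ} (hj : j < m'') : ∃ i, (i, j) ∈ T := by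
  obtain ⟨-, hhead, hlast, -, hchain⟩ := hT
  have hchain' : (T.map Prod.snd).IsChain (fun x y => y ≤ x + 1) :=
    isChain_map _ |>.mpr <| hchain.imp <| by rintro a b (rfl | rfl | rfl) <;> simp
  have := mem_of_isChain_le_add_one hchain' (by simp [hhead]) (by simp [hlast]) (Nat.zero_le j)
    (Nat.le_sub_one_of_lt hj)
  simpa using this

end IsTraversal

theorem isTraversal_map_range {m' m'' N : ℕ} (f : ℕ → ℕ × ℕ) (h0 : f 0 = (0, 0))
    (hN : f N = (m' - 1, m'' - 1)) (hlt : ∀ t ≤ N, (f t).1 < m' ∧ (f t).2 < m'')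
    (hstep : ∀ t < N, f (t + 1) = ((f t).1 + 1, (f t).2) ∨ f (t + 1) = ((f t).1, (f t).2 + 1) ∨
      f (t + 1) = ((f t).1 + 1, (f t).2 + 1)) :
    IsTraversal m' m'' ((List.range (N + 1)).map f) := by
  refine ⟨by simp, by simp [head?_range, h0], by simp [getLast?_range, hN], ?_, ?_⟩
  · simp only [mem_map, mem_range]
    rintro _ ⟨t, ht, rfl⟩
    exact hlt t (by omega)
  · exact isChain_map f |>.mpr <| (isChain_range_succ _ N).mpr hstep

theorem List.countP_mul_le_sum {l : List ℝ} (hl : ∀ x ∈ l, 0 ≤ x) (c : ℝ) :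
    l.countP (c ≤ ·) * c ≤ l.sum := by
  induction l with
  | nil => simp
  | cons x t ih =>
    have := ih fun y hy => hl y (mem_cons_of_mem _ hy)
    have hx := hl x mem_cons_self
    rw [countP_cons, sum_cons]
    by_cases h : c ≤ x <;> simp [h] <;> linarith

theorem List.card_le_countP_of_forall_exists {α β : Type*} [DecidableEq β] {l : List α}
    {p : α → Bool} (f : α → β) {s : Finset β} (h : ∀ b ∈ s, ∃ a ∈ l, p a ∧ f a = b) :
    s.card ≤ l.countP p := by
  have hs : s ⊆ ((l.filter p).map f).toFinset := fun b hb => by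
    obtain ⟨a, ha, hpa, rfl⟩ := h b hb
    simpa using ⟨a, ⟨ha, hpa⟩, rfl⟩
  calc s.card ≤ ((l.filter p).map f).toFinset.card := Finset.card_le_card hs
    _ ≤ ((l.filter p).map f).length := toFinset_card_le _
    _ = l.countP p := by rw [length_map, countP_eq_length_filter]

theorem List.mul_le_sum_take_of_pairwise_ge {s : List ℝ} (hs : s.Pairwise (· ≥ ·)) {c : ℝ}
    {k : ℕ} (hk : k ≤ s.countP (c ≤ ·)) : k * c ≤ (s.take k).sum := by
  induction s generalizing k with
  | nil => simp_all
  | cons a t ih =>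
    rw [pairwise_cons] at hs
    cases k with
    | zero => simp
    | succ k =>
      have hca : c ≤ a := by
        obtain ⟨x, hx, hcx⟩ := countP_pos_iff.mp (by omega : 0 < (a :: t).countP (c ≤ ·))
        rcases mem_cons.mp hx with rfl | hx
        · simpa using hcx
        · exact (decide_eq_true_iff.mp hcx).trans (hs.1 x hx)
      have := ih hs.2 (k := k) (by rw [countP_cons] at hk; split_ifs at hk <;> omega)
      rw [take_succ_cons, sum_cons]
      push_cast
      linarith

theorem topkSum_nonneg (k : ℕ) {l : List ℝ} (hl : ∀ x ∈ l, 0 ≤ x) : 0 ≤ topkSum k l :=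
  sum_nonneg fun x hx => hl x ((perm_insertionSort _ l).mem_iff.mp (mem_of_mem_take hx))

theorem topkSum_le (k : ℕ) {l : List ℝ} {b : ℝ} (hb : 0 ≤ b) (hl : ∀ x ∈ l, x ≤ b) :
    topkSum k l ≤ k * b := by
  set s := (l.insertionSort (· ≥ ·)).take k
  calc topkSum k l ≤ s.length • b :=
        sum_le_card_nsmul _ _ fun x hx =>
          hl x ((perm_insertionSort _ l).mem_iff.mp (mem_of_mem_take hx))
    _ ≤ k * b := by
        rw [nsmul_eq_mul]
        exact mul_le_mul_of_nonneg_right (by exact_mod_cast length_take_le _ _) hb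

theorem add_mul_le_topkSum_succ {l : List ℝ} {x c : ℝ} (hx : x ∈ l) {k : ℕ}
    (hk : k + 1 ≤ l.countP (c ≤ ·)) : x + k * c ≤ topkSum (k + 1) l := by
  have hperm := perm_insertionSort (· ≥ ·) l
  have hsort := pairwise_insertionSort (· ≥ ·) l
  obtain ⟨a, t, hst⟩ : ∃ a t, l.insertionSort (· ≥ ·) = a :: t :=
    exists_cons_of_ne_nil (ne_nil_of_mem (hperm.mem_iff.mpr hx))
  rw [hst] at hperm hsort
  rw [pairwise_cons] at hsort
  have hxa : x ≤ a := by
    rcases mem_cons.mp (hperm.mem_iff.mpr hx) with rfl | hx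
    · exact le_rfl
    · exact hsort.1 x hx
  have hkt : k ≤ t.countP (c ≤ ·) := by
    rw [← hperm.countP_eq, countP_cons] at hk
    split_ifs at hk <;> omega
  have := mul_le_sum_take_of_pairwise_ge hsort.2 hkt
  rw [topkSum, hst, take_succ_cons, sum_cons]
  linarith

section Distances

variable {E : Type*} [PseudoMetricSpace E] {σ τ : ℕ → E} {m' m'' : ℕ} {T : List (ℕ × ℕ)}

theorem matchedDists_nonneg : ∀ x ∈ matchedDists σ τ T, 0 ≤ x := by
  simp only [matchedDists, mem_map]
  rintro _ ⟨p, -, rfl⟩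
  exact dist_nonneg

theorem kDTW_le_topkSum (k : ℕ) (hT : IsTraversal m' m'' T) :
    kDTW k σ τ m' m'' ≤ topkSum k (matchedDists σ τ T) := by
  refine csInf_le ⟨0, ?_⟩ ⟨T, hT, rfl⟩
  rintro _ ⟨T', -, rfl⟩
  exact topkSum_nonneg k matchedDists_nonneg

theorem DTW_le_sum (hT : IsTraversal m' m'' T) : DTW σ τ m' m'' ≤ (matchedDists σ τ T).sum := by
  refine csInf_le ⟨0, ?_⟩ ⟨T, hT, rfl⟩
  rintro _ ⟨T', -, rfl⟩
  exact sum_nonneg matchedDists_nonneg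

end Distances

def stepCurve (n : ℕ) : ℕ → ℝ := fun i => if i < n + 4 then 0 else 1

def spikeCurve (n : ℕ) : ℕ → ℝ := fun j => if j ≤ n then 1 else if j = n + 1 then 2 else 0

section Example

variable {n : ℕ} {T : List (ℕ × ℕ)}

theorem spikeCurve_nonneg (j : ℕ) : 0 ≤ spikeCurve n j := by
  unfold spikeCurve; split_ifs <;> norm_num

theorem one_le_spikeCurve {j : ℕ} (hj : j ≤ n + 1) : 1 ≤ spikeCurve n j := by
  unfold spikeCurve; split_ifs <;> first | omega | norm_num

theorem dist_stepCurve_of_lt {i : ℕ} (hi : i < n + 4) (j : ℕ) :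
    dist (stepCurve n i) (spikeCurve n j) = spikeCurve n j := by
  simp [stepCurve, hi, Real.dist_eq, abs_of_nonneg (spikeCurve_nonneg j)]

theorem dist_stepCurve_last_le_one (j : ℕ) : dist (stepCurve n (n + 4)) (spikeCurve n j) ≤ 1 := by
  simp only [stepCurve, lt_irrefl, if_false, spikeCurve, Real.dist_eq]
  split_ifs <;> norm_num

theorem dist_stepCurve_spikeCurve_last : dist (stepCurve n (n + 4)) (spikeCurve n (n + 4)) = 1 := by
  simp [stepCurve, spikeCurve]

theorem kDTW_stepCurve_spikeCurve_le (k : ℕ) :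
    kDTW k (stepCurve n) (spikeCurve n) (n + 5) (n + 5) ≤ k := by
  -- down the first column, then along the last row
  have hL := isTraversal_map_range (m' := n + 5) (m'' := n + 5) (N := 2 * n + 8)
    (fun t => (min t (n + 4), t - (n + 4))) (by simp) (by simp; omega) (fun t ht => by simp; omega)
    (fun t ht => by by_cases h : t < n + 4 <;> simp <;> omega)
  refine (kDTW_le_topkSum k hL).trans ?_
  simpa using topkSum_le k zero_le_one fun x hx => by
    simp only [matchedDists, map_map, mem_map, mem_range, Function.comp_def] at hx
    obtain ⟨t, -, rfl⟩ := hx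
    by_cases h : t < n + 4
    · rw [min_eq_left h.le, Nat.sub_eq_zero_of_le h.le, dist_stepCurve_of_lt h]
      simp [spikeCurve]
    · simpa [min_eq_right (not_lt.mp h)] using dist_stepCurve_last_le_one _

theorem DTW_stepCurve_spikeCurve_le : DTW (stepCurve n) (spikeCurve n) (n + 5) (n + 5) ≤ n + 4 := by
  have hD := isTraversal_map_range (m' := n + 5) (m'' := n + 5) (N := n + 4)
    (fun t => (t, t)) rfl rfl (fun t ht => by simp; omega) (fun t _ => by simp)
  refine (DTW_le_sum hD).trans (le_of_eq ?_)
  have hone : ∀ t ∈ range n, dist (stepCurve n t) (spikeCurve n t) = 1 := fun t ht => by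
    rw [mem_range] at ht
    rw [dist_stepCurve_of_lt (by omega), spikeCurve, if_pos ht.le]
  simp only [matchedDists, map_map, Function.comp_def, sum_range_succ, map_congr_left hone]
  simp [stepCurve, spikeCurve]
  ring

theorem sum_matchedDists_ge_of_mem_last_row (hT : IsTraversal (n + 5) (n + 5) T) {j : ℕ}
    (hj : j ≤ n + 1) (hmem : (n + 4, j) ∈ T) :
    n + 5 ≤ (matchedDists (stepCurve n) (spikeCurve n) T).sum := by
  have hrows : ∀ i ∈ Finset.range (n + 5), ∃ p ∈ T,
      decide (1 ≤ dist (stepCurve n p.1) (spikeCurve n p.2)) ∧ p.1 = i := by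
    intro i hi
    rw [Finset.mem_range] at hi
    by_cases hlast : i = n + 4
    · exact ⟨(n + 4, n + 4), by simpa using hT.last_mem, by simp [dist_stepCurve_spikeCurve_last],
        hlast.symm⟩
    obtain ⟨c, hc⟩ := hT.exists_mem_fst hi
    have hcj : c ≤ j := by
      rcases hT.le_total_of_mem hc hmem with h | h
      · exact (Prod.mk_le_mk.mp h).2
      · exact absurd (Prod.mk_le_mk.mp h).1 (by omega)
    refine ⟨(i, c), hc, ?_, rfl⟩
    simpa [dist_stepCurve_of_lt (by omega : i < n + 4)] using one_le_spikeCurve (by omega : c ≤ n + 1)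
  calc (n + 5 : ℝ) = (Finset.range (n + 5)).card * 1 := by simp
    _ ≤ (matchedDists (stepCurve n) (spikeCurve n) T).countP (1 ≤ ·) * 1 := by
        rw [matchedDists, countP_map]
        exact mul_le_mul_of_nonneg_right
          (by exact_mod_cast List.card_le_countP_of_forall_exists Prod.fst hrows) zero_le_one
    _ ≤ (matchedDists (stepCurve n) (spikeCurve n) T).sum :=
        countP_mul_le_sum matchedDists_nonneg 1

theorem topkSum_matchedDists_ge_of_not_mem_last_row (hT : IsTraversal (n + 5) (n + 5) T)
    (hlast : ∀ j ≤ n + 1, (n + 4, j) ∉ T) {k : ℕ} (hk : k ≤ n + 2) :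
    k + 2 ≤ topkSum (k + 1) (matchedDists (stepCurve n) (spikeCurve n) T) := by
  have hcol : ∀ j ≤ n + 1, ∃ i, (i, j) ∈ T ∧
      dist (stepCurve n i) (spikeCurve n j) = spikeCurve n j := by
    intro j hj
    obtain ⟨i, hi⟩ := hT.exists_mem_snd (by omega : j < n + 5)
    have hin : i ≠ n + 4 := by rintro rfl; exact hlast j hj hi
    exact ⟨i, hi, dist_stepCurve_of_lt (by have := (hT.lt_of_mem hi).1; omega) j⟩
  have hcols : ∀ j ∈ insert (n + 4) (Finset.range (n + 2)), ∃ p ∈ T,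
      decide (1 ≤ dist (stepCurve n p.1) (spikeCurve n p.2)) ∧ p.2 = j := by
    intro j hj
    rw [Finset.mem_insert, Finset.mem_range] at hj
    rcases hj with rfl | hj
    · exact ⟨(n + 4, n + 4), by simpa using hT.last_mem, by simp [dist_stepCurve_spikeCurve_last],
        rfl⟩
    obtain ⟨i, hi, hd⟩ := hcol j (by omega)
    refine ⟨(i, j), hi, ?_, rfl⟩
    simpa [hd] using one_le_spikeCurve (by omega : j ≤ n + 1)
  have hcount : k + 1 ≤ (matchedDists (stepCurve n) (spikeCurve n) T).countP (1 ≤ ·) := by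
    have := List.card_le_countP_of_forall_exists Prod.snd hcols
    rw [Finset.card_insert_of_notMem (by simp), Finset.card_range] at this
    rw [matchedDists, countP_map]
    exact le_trans (by omega) this
  obtain ⟨i, hi, hd⟩ := hcol (n + 1) le_rfl
  have hspike : 2 ∈ matchedDists (stepCurve n) (spikeCurve n) T :=
    mem_map.mpr ⟨(i, n + 1), hi, by rw [hd]; simp [spikeCurve]⟩
  have := add_mul_le_topkSum_succ hspike hcount
  linarith

end Example

/-- for every `m ≥ 5` and `⌊m/4⌋ ≤ k ≤ 3⌊m/4⌋`, there are curves of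
complexity `m` in `ℝ` whose `k`-DTW distance is strictly smaller than the sum of the `k`
largest distances of any traversal realizing the DTW distance. -/
theorem kDTW_ne_topk_of_DTW (m k : ℕ) (hm : 5 ≤ m) (hk₁ : m / 4 ≤ k) (hk₂ : k ≤ 3 * (m / 4)) :
    ∃ σ τ : ℕ → ℝ, ∀ T : List (ℕ × ℕ), IsTraversal m m T →
      (matchedDists σ τ T).sum = DTW σ τ m m →
      kDTW k σ τ m m < topkSum k (matchedDists σ τ T) := by
  obtain ⟨n, rfl⟩ : ∃ n, m = n + 5 := ⟨m - 5, by omega⟩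
  obtain ⟨k, rfl⟩ : ∃ k', k = k' + 1 := ⟨k - 1, by omega⟩
  refine ⟨stepCurve n, spikeCurve n, fun T hT hopt => ?_⟩
  have hlast : ∀ j ≤ n + 1, (n + 4, j) ∉ T := fun j hj hmem => by
    have := sum_matchedDists_ge_of_mem_last_row hT hj hmem
    have := DTW_stepCurve_spikeCurve_le (n := n)
    linarith
  calc kDTW (k + 1) (stepCurve n) (spikeCurve n) (n + 5) (n + 5) ≤ k + 1 := by
        exact_mod_cast kDTW_stepCurve_spikeCurve_le (k + 1)
    _ < k + 2 := by linarith
    _ ≤ _ := topkSum_matchedDists_ge_of_not_mem_last_row hT hlast (by omega)
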